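/- arXiv:2210.11418 — 5 statements merged into one kernel-verified Lean document; each statement's English description precedes it below -/
import Mathlib

section
/- Let (P, <) be a partially ordered set in which every antichain has cardinality at most d, and let n, N be natural numbers with N > 2·n·d. Suppose h, k : Fin N → P are functions such that for all indices i < j: h i ≠ h j and ¬(h i < h j), and also k i ≠ k j and ¬(k i < k j). Then there exist an index m and indices i₁ < i₂ < ... < iₙ < m and m < j₁ < j₂ < ... < jₙ such that h i₁ > h i₂ > ... > h iₙ > h m and k m > k j₁ > k j₂ > ... > k jₙ. -/
/-!
Rank the values of `h` by their coheight in the finite poset `Set.range h`, and the values of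
`k` by their height in `Set.range k`. Each level of such a ranking is an antichain, so at most
`n * d` indices have `h`-rank below `n`, and at most `n * d` have `k`-rank below `n`. Since
`N > 2 * n * d`, some index `m` has both ranks at least `n`, which gives a chain of length `n`
above `h m` and one below `k m`. Because neither sequence ever moves strictly up, the indices
of the first chain come before `m` and those of the second come after it.
-/

open Finset Order

theorem card_filter_lt_natCast_le_mul {ι : Type*} [Fintype ι] (f : ι → ℕ∞) {d : ℕ}
    (hf : ∀ v : ℕ, #{i | f i = v} ≤ d) (n : ℕ) : #{i | f i < n} ≤ n * d := by
  classical
  have maps_to :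
      ∀ i ∈ ({i | f i < n} : Finset ι), f i ∈ (range n).image ((↑) : ℕ → ℕ∞) := by
    intro i hi
    have hlt : f i < n := (mem_filter.mp hi).2
    obtain ⟨v, hv⟩ := ENat.ne_top_iff_exists.mp (hlt.trans (ENat.natCast_lt_top n)).ne
    rw [← hv, Nat.cast_lt] at hlt
    exact mem_image.mpr ⟨v, mem_range.mpr hlt, hv⟩
  calc #{i | f i < n} ≤ d * #((range n).image ((↑) : ℕ → ℕ∞)) :=
        card_le_mul_card_image_of_maps_to maps_to d fun b hb => by
          obtain ⟨v, -, rfl⟩ := mem_image.mp hb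
          exact (card_le_card fun i hi => by simp_all).trans (hf v)
    _ ≤ d * n := Nat.mul_le_mul_left _ (card_image_le.trans (card_range n).le)
    _ = n * d := mul_comm _ _

theorem card_le_of_isAntichain_subtype {P : Type*} [PartialOrder P] {d : ℕ}
    (hd : ∀ A : Finset P, IsAntichain (· ≤ ·) (A : Set P) → #A ≤ d) (s : Set P)
    (A : Finset s) (hA : IsAntichain (· ≤ ·) (A : Set s)) : #A ≤ d := by
  simpa using hd (A.map (Function.Embedding.subtype _))
    (by simpa using hA.image_embedding (OrderEmbedding.subtype _))

namespace Order

section Preorder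

variable {α : Type*} [Preorder α]

theorem exists_strictAnti_gt_of_le_coheight {x : α} {n : ℕ} (hn : n ≤ coheight x) :
    ∃ y : Fin n → α, StrictAnti y ∧ ∀ a, x < y a := by
  obtain ⟨p, rfl, rfl⟩ := exists_series_of_le_coheight x hn
  exact ⟨fun a => p a.rev.succ, fun a b hab => p.strictMono (by simpa using hab),
    fun a => p.strictMono (Fin.succ_pos _)⟩

theorem exists_strictAnti_lt_of_le_height {x : α} {n : ℕ} (hn : n ≤ height x) :
    ∃ y : Fin n → α, StrictAnti y ∧ ∀ a, y a < x := by
  obtain ⟨p, rfl, rfl⟩ := exists_series_of_le_height x hn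
  exact ⟨fun a => p a.rev.castSucc, fun a b hab => p.strictMono (by simpa using hab),
    fun a => p.strictMono (Fin.castSucc_lt_last _)⟩

end Preorder

section PartialOrder

variable {α : Type*} [PartialOrder α]

theorem isAntichain_setOf_height_eq (v : ℕ) :
    IsAntichain (· ≤ ·) {x : α | height x = v} := by
  intro x (hx : height x = v) y (hy : height y = v) hne hle
  exact (height_strictMono (lt_of_le_of_ne hle hne) (hx ▸ ENat.natCast_lt_top v)).ne
    (hx.trans hy.symm)

theorem isAntichain_setOf_coheight_eq (v : ℕ) :
    IsAntichain (· ≤ ·) {x : α | coheight x = v} := by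
  intro x (hx : coheight x = v) y (hy : coheight y = v) hne hle
  exact (coheight_strictAnti (lt_of_le_of_ne hle hne) (hy ▸ ENat.natCast_lt_top v)).ne
    (hy.trans hx.symm)

variable [Fintype α] {d : ℕ}

theorem card_filter_height_lt_le
    (hd : ∀ A : Finset α, IsAntichain (· ≤ ·) (A : Set α) → #A ≤ d) (n : ℕ) :
    #{x : α | height x < n} ≤ n * d :=
  card_filter_lt_natCast_le_mul _
    (fun v => hd _ (by simpa using isAntichain_setOf_height_eq v)) n

theorem card_filter_coheight_lt_le
    (hd : ∀ A : Finset α, IsAntichain (· ≤ ·) (A : Set α) → #A ≤ d) (n : ℕ) :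
    #{x : α | coheight x < n} ≤ n * d :=
  card_filter_lt_natCast_le_mul _
    (fun v => hd _ (by simpa using isAntichain_setOf_coheight_eq v)) n

end PartialOrder

end Order

section RangeFactorization

variable {ι P : Type*} [PartialOrder P] {h : ι → P} {d : ℕ}

theorem card_filter_height_rangeFactorization_lt_le [Fintype ι]
    (hd : ∀ A : Finset P, IsAntichain (· ≤ ·) (A : Set P) → #A ≤ d) (hinj : h.Injective)
    (n : ℕ) : #{i | height (Set.rangeFactorization h i) < n} ≤ n * d := by
  classical
  calc #{i | height (Set.rangeFactorization h i) < n}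
      ≤ #{x : Set.range h | height x < n} :=
        card_le_card_of_injOn _ (fun i hi => by simpa using hi)
          (Set.rangeFactorization_injective.mpr hinj).injOn
    _ ≤ n * d := card_filter_height_lt_le (card_le_of_isAntichain_subtype hd _) n

theorem card_filter_coheight_rangeFactorization_lt_le [Fintype ι]
    (hd : ∀ A : Finset P, IsAntichain (· ≤ ·) (A : Set P) → #A ≤ d) (hinj : h.Injective)
    (n : ℕ) : #{i | coheight (Set.rangeFactorization h i) < n} ≤ n * d := by
  classical
  calc #{i | coheight (Set.rangeFactorization h i) < n}
      ≤ #{x : Set.range h | coheight x < n} :=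
        card_le_card_of_injOn _ (fun i hi => by simpa using hi)
          (Set.rangeFactorization_injective.mpr hinj).injOn
    _ ≤ n * d := card_filter_coheight_lt_le (card_le_of_isAntichain_subtype hd _) n

variable [LinearOrder ι]

theorem injective_of_forall_lt_ne {β : Type*} {f : ι → β}
    (hf : ∀ i j : ι, i < j → f i ≠ f j) : f.Injective :=
  fun i j he => by_contra fun hne =>
    (lt_or_gt_of_ne hne).elim (fun hlt => hf i j hlt he) (fun hlt => hf j i hlt he.symm)

theorem lt_of_apply_lt (hh : ∀ i j : ι, i < j → ¬ h i < h j) {i j : ι} (hij : h i < h j) :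
    j < i :=
  lt_of_not_ge fun hle => hle.eq_or_lt.elim (fun he => hij.ne (congrArg h he)) (hh i j · hij)

theorem exists_chain_above_of_le_coheight (hh : ∀ i j : ι, i < j → ¬ h i < h j)
    {m : ι} {n : ℕ} (hm : n ≤ coheight (Set.rangeFactorization h m)) :
    ∃ ii : Fin n → ι, StrictMono ii ∧ (∀ a, ii a < m) ∧
      (∀ a b, a < b → h (ii b) < h (ii a)) ∧ ∀ a, h m < h (ii a) := by
  obtain ⟨y, hy, hmy⟩ := exists_strictAnti_gt_of_le_coheight hm
  choose ii hii using fun a => (y a).2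
  have hdec : ∀ a b, a < b → h (ii b) < h (ii a) := fun a b hab => by
    rw [hii, hii]; exact hy hab
  have habove : ∀ a, h m < h (ii a) := fun a => by
    rw [hii]; exact hmy a
  exact ⟨ii, fun a b hab => lt_of_apply_lt hh (hdec a b hab),
    fun a => lt_of_apply_lt hh (habove a), hdec, habove⟩

theorem exists_chain_below_of_le_height (hh : ∀ i j : ι, i < j → ¬ h i < h j)
    {m : ι} {n : ℕ} (hm : n ≤ height (Set.rangeFactorization h m)) :
    ∃ jj : Fin n → ι, StrictMono jj ∧ (∀ a, m < jj a) ∧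
      (∀ a b, a < b → h (jj b) < h (jj a)) ∧ ∀ a, h (jj a) < h m := by
  obtain ⟨y, hy, hym⟩ := exists_strictAnti_lt_of_le_height hm
  choose jj hjj using fun a => (y a).2
  have hdec : ∀ a b, a < b → h (jj b) < h (jj a) := fun a b hab => by
    rw [hjj, hjj]; exact hy hab
  have hbelow : ∀ a, h (jj a) < h m := fun a => by
    rw [hjj]; exact hym a
  exact ⟨jj, fun a b hab => lt_of_apply_lt hh (hdec a b hab),
    fun a => lt_of_apply_lt hh (hbelow a), hdec, hbelow⟩

end RangeFactorization

/-- In a poset with antichains of size at most `d`, given two sequences of length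
`N > 2·n·d` never strictly increasing (in the sense of a geodesic's halfspace sequence),
one finds a middle index `m` with a descending chain of length `n` of `h`-values before it
ending above `h m`, and a descending chain of length `n` of `k`-values after it
starting below `k m`. -/
theorem poset_grid_lemma {P : Type*} [PartialOrder P] (d n N : ℕ)
    (hd : ∀ A : Finset P, IsAntichain (· ≤ ·) (A : Set P) → A.card ≤ d)
    (hN : 2 * n * d < N)
    (h k : Fin N → P)
    (hh : ∀ i j : Fin N, i < j → h i ≠ h j ∧ ¬ h i < h j)
    (hk : ∀ i j : Fin N, i < j → k i ≠ k j ∧ ¬ k i < k j) :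
    ∃ m : Fin N, ∃ ii jj : Fin n → Fin N,
      StrictMono ii ∧ StrictMono jj ∧
      (∀ a, ii a < m) ∧ (∀ a, m < jj a) ∧
      (∀ a b, a < b → h (ii b) < h (ii a)) ∧ (∀ a, h m < h (ii a)) ∧
      (∀ a b, a < b → k (jj b) < k (jj a)) ∧ (∀ a, k (jj a) < k m) := by
  set badH : Finset (Fin N) := {m | coheight (Set.rangeFactorization h m) < n}
  set badK : Finset (Fin N) := {m | height (Set.rangeFactorization k m) < n}
  have hbad : #(badH ∪ badK) < #(univ : Finset (Fin N)) := calc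
    #(badH ∪ badK) ≤ n * d + n * d := (card_union_le _ _).trans (add_le_add
      (card_filter_coheight_rangeFactorization_lt_le hd
        (injective_of_forall_lt_ne fun i j hij => (hh i j hij).1) n)
      (card_filter_height_rangeFactorization_lt_le hd
        (injective_of_forall_lt_ne fun i j hij => (hk i j hij).1) n))
    _ < #(univ : Finset (Fin N)) := by rw [card_univ, Fintype.card_fin]; lia
  obtain ⟨m, -, hm⟩ := exists_mem_notMem_of_card_lt_card hbad
  simp only [badH, badK, mem_union, mem_filter_univ, not_or, not_lt] at hm
  obtain ⟨ii, hii, hiim, hhii, hmii⟩ :=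
    exists_chain_above_of_le_coheight (fun i j hij => (hh i j hij).2) hm.1
  obtain ⟨jj, hjj, hmjj, hkjj, hjjm⟩ :=
    exists_chain_below_of_le_height (fun i j hij => (hk i j hij).2) hm.2
  exact ⟨m, ii, jj, hii, hjj, hiim, hmjj, hhii, hmii, hkjj, hjjm⟩
end

section
/- Let Γ be a finite simple graph and v a vertex of Γ. For a vertex w, write St(w) for the closed star {w} ∪ {u : u adjacent to w}. Then a vertex w belongs to every maximal clique of Γ containing v if and only if St(v) ⊆ St(w). -/
/-!
If `St(v) ⊆ St(w)`, then `w` is adjacent to (or equal to) every vertex of any clique through `v`,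
so adding `w` to a maximal clique through `v` keeps it a clique, and maximality forces `w` into it.
Conversely, each `u ∈ St(v)` spans a clique `{v, u}`; a maximal clique containing it contains `w`
by assumption, so `u` is equal or adjacent to `w`.
-/

namespace SimpleGraph

variable {V : Type*} (G : SimpleGraph V)

def closedStar (v : V) : Set V := insert v (G.neighborSet v)

variable {G}

lemma IsClique.subset_closedStar {s : Set V} {v : V} (hs : G.IsClique s) (hv : v ∈ s) :
    s ⊆ G.closedStar v := fun _ hu =>
  or_iff_not_imp_left.2 fun huv => hs hv hu (Ne.symm huv)

lemma isClique_pair_of_mem_closedStar {u v : V} (hu : u ∈ G.closedStar v) : G.IsClique {v, u} :=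
  isClique_pair.2 fun hvu => hu.resolve_left (Ne.symm hvu)

lemma isClique_insert_of_closedStar_subset {s : Set V} {v w : V} (hs : G.IsClique s) (hv : v ∈ s)
    (hvw : G.closedStar v ⊆ G.closedStar w) : G.IsClique (insert w s) :=
  isClique_insert.2 ⟨hs, fun _ hu hwu => (hvw (hs.subset_closedStar hv hu)).resolve_left (Ne.symm hwu)⟩

lemma IsClique.exists_maximal_superset {s : Set V} (hs : G.IsClique s) :
    ∃ t, s ⊆ t ∧ Maximal G.IsClique t :=
  zorn_subset_nonempty {t | G.IsClique t}
    (fun c hc hchain _ => ⟨⋃₀ c, (isClique_sUnion hchain.directedOn).2 hc,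
      fun _ => Set.subset_sUnion_of_mem⟩) s hs

end SimpleGraph

theorem mem_all_maximal_cliques_iff_star_subset_general {V : Type*}
    (G : SimpleGraph V) (v w : V) :
    (∀ s : Set V, G.IsClique s → v ∈ s →
        (∀ t : Set V, G.IsClique t → s ⊆ t → s = t) → w ∈ s) ↔
      insert v (G.neighborSet v) ⊆ insert w (G.neighborSet w) := by
  change _ ↔ G.closedStar v ⊆ G.closedStar w
  constructor
  · intro h u hu
    obtain ⟨s, hvus, hmax⟩ := (SimpleGraph.isClique_pair_of_mem_closedStar hu).exists_maximal_superset
    have hws : w ∈ s := h s hmax.prop (hvus (Set.mem_insert v _))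
      fun t ht hst => hmax.eq_of_subset ht hst
    exact hmax.prop.subset_closedStar hws (hvus (Set.mem_insert_of_mem v rfl))
  · intro hvw s hs hv hmax
    rw [hmax _ (SimpleGraph.isClique_insert_of_closedStar_subset hs hv hvw) (Set.subset_insert w s)]
    exact Set.mem_insert w s

/-- In a finite simple graph, a vertex `w` belongs to every maximal clique containing `v`
if and only if the closed star of `v` is contained in the closed star of `w`. -/
theorem mem_all_maximal_cliques_iff_star_subset {V : Type*} [Fintype V]
    (G : SimpleGraph V) (v w : V) :
    (∀ s : Set V, G.IsClique s → v ∈ s →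
        (∀ t : Set V, G.IsClique t → s ⊆ t → s = t) → w ∈ s) ↔
      insert v (G.neighborSet v) ⊆ insert w (G.neighborSet w) :=
  mem_all_maximal_cliques_iff_star_subset_general G v w
end

section
/- Let a group G act properly and cocompactly by isometries on a proper metric space X, and let A ⊆ X be a nonempty closed subset. Then the setwise stabilizer G_A = {g ∈ G : gA = A} acts cocompactly on A if and only if the collection of translates {gA : g ∈ G} is locally finite (every ball in X meets only finitely many distinct translates gA). -/
/-!
If the stabilizer `G_A` moves `K ∩ A` over all of `A`, every translate of `A` meeting a compact
set `L` is `γ • A` for some `γ` with `γ • K` meeting `L`; properness leaves finitely many such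
`γ`. Conversely, if `K₀` is a compact set whose translates cover `X`, only finitely many
translates `f • A` meet `K₀`, and `⋃ f⁻¹ • K₀` over representatives `f` is a compact set that
`G_A` moves over all of `A`.
-/

open Pointwise

section Translates

variable (G : Type*) {X : Type*} [Group G] [MulAction G X]

def translatesMeeting (A L : Set X) : Set (Set X) :=
  {B : Set X | (∃ g : G, g • A = B) ∧ (B ∩ L).Nonempty}

variable {G} {A : Set X}

theorem translatesMeeting_mono {L L' : Set X} (h : L ⊆ L') :
    translatesMeeting G A L ⊆ translatesMeeting G A L' :=
  fun _ ⟨hB, hBL⟩ => ⟨hB, hBL.mono (Set.inter_subset_inter_right _ h)⟩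

theorem finite_translatesMeeting_of_cocompact_stabilizer [TopologicalSpace X]
    (hproper : ∀ K : Set X, IsCompact K → {g : G | ((g • K) ∩ K).Nonempty}.Finite)
    {K L : Set X} (hK : IsCompact K) (hKA : ∀ a ∈ A, ∃ g : G, g • A = A ∧ a ∈ g • (K ∩ A))
    (hL : IsCompact L) : (translatesMeeting G A L).Finite := by
  refine ((hproper _ (hK.union hL)).image (· • A)).subset ?_
  rintro B ⟨⟨g, rfl⟩, _, ⟨a, haA, rfl⟩, hgaL⟩
  obtain ⟨h, hhA, k, ⟨hkK, -⟩, rfl⟩ := hKA a haA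
  refine ⟨g * h, ⟨(g * h) • k, ⟨k, Or.inl hkK, rfl⟩, Or.inr ?_⟩, ?_⟩
  · rwa [mul_smul]
  · simp only [mul_smul, hhA]

theorem finite_translatesMeeting_of_isBounded [PseudoMetricSpace X]
    (hlf : ∀ (x : X) (r : ℝ), (translatesMeeting G A (Metric.ball x r)).Finite)
    {L : Set X} (hL : Bornology.IsBounded L) : (translatesMeeting G A L).Finite := by
  rcases L.eq_empty_or_nonempty with rfl | ⟨x, -⟩
  · convert Set.finite_empty
    exact Set.eq_empty_of_forall_notMem fun B hB => by simpa using hB.2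
  · obtain ⟨r, hLr⟩ := (Metric.isBounded_iff_subset_ball x).mp hL
    exact (hlf x r).subset (translatesMeeting_mono hLr)

theorem exists_cocompact_stabilizer_of_finite_translatesMeeting [TopologicalSpace X]
    [ContinuousConstSMul G X] {K₀ : Set X} (hK₀ : IsCompact K₀)
    (hcover : ⋃ g : G, g • K₀ = Set.univ) (hfin : (translatesMeeting G A K₀).Finite) :
    ∃ K : Set X, IsCompact K ∧ ∀ a ∈ A, ∃ g : G, g • A = A ∧ a ∈ g • (K ∩ A) := by
  have hrange : ((· • A) '' {g : G | (g • A ∩ K₀).Nonempty}).Finite :=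
    hfin.subset fun _ ⟨g, hg, hgA⟩ => ⟨⟨g, hgA⟩, hgA ▸ hg⟩
  obtain ⟨F, hFsub, hF, hFimage⟩ :=
    Set.exists_subset_image_finite_and.mp ⟨_, subset_rfl, hrange, rfl⟩
  refine ⟨⋃ f ∈ F, f⁻¹ • K₀, hF.isCompact_biUnion fun f _ => hK₀.smul f⁻¹, fun a haA => ?_⟩
  obtain ⟨g, hag⟩ := Set.mem_iUnion.mp (hcover.symm ▸ Set.mem_univ a : a ∈ ⋃ g : G, g • K₀)
  have hga : g⁻¹ • a ∈ K₀ := Set.mem_smul_set_iff_inv_smul_mem.mp hag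
  obtain ⟨f, hfF, hfA⟩ : g⁻¹ • A ∈ (· • A) '' F :=
    hFimage ▸ ⟨g⁻¹, ⟨g⁻¹ • a, Set.smul_mem_smul_set haA, hga⟩, rfl⟩
  -- `g * f` stabilizes `A` and carries `f⁻¹ • g⁻¹ • a ∈ f⁻¹ • K₀` to `a`.
  have hgfA : (g * f) • A = A := by simp only [mul_smul, hfA, smul_inv_smul]
  refine ⟨g * f, hgfA, Set.mem_smul_set_iff_inv_smul_mem.mpr ⟨?_, ?_⟩⟩
  · refine Set.mem_biUnion hfF ?_
    rw [mul_inv_rev, mul_smul]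
    exact Set.smul_mem_smul_set hga
  · exact Set.mem_smul_set_iff_inv_smul_mem.mp (hgfA.symm ▸ haA)

end Translates

theorem stabilizer_cocompact_iff_locally_finite_general {G X : Type*} [Group G]
    [MetricSpace X] [ProperSpace X] [MulAction G X]
    (hiso : ∀ g : G, Isometry (fun x : X => g • x))
    (hproper : ∀ K : Set X, IsCompact K → {g : G | ((g • K) ∩ K).Nonempty}.Finite)
    (hcocpt : ∃ K : Set X, IsCompact K ∧ ⋃ g : G, g • K = Set.univ)
    (A : Set X) :
    (∃ K : Set X, IsCompact K ∧ ∀ a ∈ A, ∃ g : G, g • A = A ∧ a ∈ g • (K ∩ A)) ↔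
      (∀ (x : X) (r : ℝ),
        {B : Set X | (∃ g : G, g • A = B) ∧ (B ∩ Metric.ball x r).Nonempty}.Finite) := by
  have : ContinuousConstSMul G X := ⟨fun g => (hiso g).continuous⟩
  constructor
  · rintro ⟨K, hK, hKA⟩ x r
    exact (finite_translatesMeeting_of_cocompact_stabilizer hproper hK hKA
      (isCompact_closedBall x r)).subset (translatesMeeting_mono Metric.ball_subset_closedBall)
  · intro hlf
    obtain ⟨K₀, hK₀, hcover⟩ := hcocpt
    exact exists_cocompact_stabilizer_of_finite_translatesMeeting hK₀ hcover
      (finite_translatesMeeting_of_isBounded hlf hK₀.isBounded)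

/-- For a proper cocompact isometric action `G ↷ X` on a proper metric space and a nonempty
closed subset `A`, the setwise stabilizer of `A` acts cocompactly on `A` if and only if the
family of translates `{gA : g ∈ G}` is locally finite. -/
theorem stabilizer_cocompact_iff_locally_finite {G X : Type*} [Group G]
    [MetricSpace X] [ProperSpace X] [MulAction G X]
    (hiso : ∀ g : G, Isometry (fun x : X => g • x))
    (hproper : ∀ K : Set X, IsCompact K → {g : G | ((g • K) ∩ K).Nonempty}.Finite)
    (hcocpt : ∃ K : Set X, IsCompact K ∧ ⋃ g : G, g • K = Set.univ)
    (A : Set X) (hne : A.Nonempty) (hcl : IsClosed A) :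
    (∃ K : Set X, IsCompact K ∧ ∀ a ∈ A, ∃ g : G, g • A = A ∧ a ∈ g • (K ∩ A)) ↔
      (∀ (x : X) (r : ℝ),
        {B : Set X | (∃ g : G, g • A = B) ∧ (B ∩ Metric.ball x r).Nonempty}.Finite) :=
  stabilizer_cocompact_iff_locally_finite_general hiso hproper hcocpt A
end

section
/- Let a group G act properly and cocompactly by isometries on a proper metric space X. Let A, B ⊆ X be nonempty closed subsets that are invariant and acted upon cocompactly by subgroups H ≤ G and K ≤ G respectively. Then the intersection H ∩ K acts cocompactly on A ∩ B (this holds vacuously if A ∩ B = ∅). -/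
/-!
If `x = h • c = k • c'` with `c ∈ C_A`, `c' ∈ C_B`, then `h⁻¹ * k` moves `c'` into `C_A`, so by
properness it lies in a finite set `F`. Fixing once and for all a decomposition `f = s⁻¹ * k'`
(`s ∈ H`, `k' ∈ K`) of each realisable `f ∈ F`, the element `h * s⁻¹ = k * k'⁻¹` lies in
`H ⊓ K` and sends `s • C_A` to a set containing `x`. Hence the finite union of the `s • C_A`
is a compact fundamental set for `H ⊓ K` on `A ∩ B`.
-/

open Pointwise

section

variable {G α : Type*} [Group G] [MulAction G α]

theorem inv_mul_smul_inter_nonempty {C D : Set α} {x : α} {h k : G}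
    (hxh : x ∈ h • C) (hxk : x ∈ k • D) : ((h⁻¹ * k) • D ∩ C).Nonempty := by
  rw [Set.mem_smul_set_iff_inv_smul_mem] at hxh hxk
  refine ⟨h⁻¹ • x, ?_, hxh⟩
  rw [Set.mem_smul_set_iff_inv_smul_mem, smul_smul, mul_inv_rev, inv_inv, mul_inv_cancel_right]
  exact hxk

theorem Subgroup.mul_inv_mem_inf_of_inv_mul_eq {H K : Subgroup G} {h s k k' : G}
    (hh : h ∈ H) (hs : s ∈ H) (hk : k ∈ K) (hk' : k' ∈ K) (heq : h⁻¹ * k = s⁻¹ * k') :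
    h * s⁻¹ ∈ H ⊓ K := by
  have hcomm : h * s⁻¹ = k * k'⁻¹ :=
    calc h * s⁻¹ = h * (s⁻¹ * k') * k'⁻¹ := by group
      _ = h * (h⁻¹ * k) * k'⁻¹ := by rw [heq]
      _ = k * k'⁻¹ := by group
  exact Subgroup.mem_inf.mpr ⟨mul_mem hh (inv_mem hs), hcomm ▸ mul_mem hk (inv_mem hk')⟩

theorem Subgroup.exists_finite_inf_coset_reps (H K : Subgroup G) {F : Set G} (hF : F.Finite) :
    ∃ S : Set G, S.Finite ∧
      ∀ h ∈ H, ∀ k ∈ K, h⁻¹ * k ∈ F → ∃ s ∈ S, h * s⁻¹ ∈ H ⊓ K := by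
  have hdecomp : ∀ f ∈ {f ∈ F | ∃ h ∈ H, ∃ k ∈ K, h⁻¹ * k = f},
      ∃ s ∈ H, ∃ k' ∈ K, s⁻¹ * k' = f := fun f hf => hf.2
  choose! σ hσH k' hk'K hσ using hdecomp
  refine ⟨σ '' {f ∈ F | ∃ h ∈ H, ∃ k ∈ K, h⁻¹ * k = f}, (hF.sep _).image σ, ?_⟩
  intro h hh k hk hf
  have hmem : h⁻¹ * k ∈ {f ∈ F | ∃ h ∈ H, ∃ k ∈ K, h⁻¹ * k = f} := ⟨hf, h, hh, k, hk, rfl⟩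
  exact ⟨σ _, Set.mem_image_of_mem σ hmem, Subgroup.mul_inv_mem_inf_of_inv_mul_eq hh
    (hσH _ hmem) hk (hk'K _ hmem) (hσ _ hmem).symm⟩

theorem exists_finite_inf_smul_cover (H K : Subgroup G) {CA CB : Set α}
    (hF : {g : G | (g • CB ∩ CA).Nonempty}.Finite) :
    ∃ S : Set G, S.Finite ∧ ∀ x : α, ∀ h ∈ H, ∀ k ∈ K, x ∈ h • CA → x ∈ k • CB →
      ∃ g ∈ H ⊓ K, x ∈ g • ⋃ s ∈ S, s • CA := by
  obtain ⟨S, hS, hreps⟩ := H.exists_finite_inf_coset_reps K hF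
  refine ⟨S, hS, fun x h hh k hk hxh hxk => ?_⟩
  obtain ⟨s, hsS, hs⟩ := hreps h hh k hk (inv_mul_smul_inter_nonempty hxh hxk)
  refine ⟨h * s⁻¹, hs, Set.smul_set_mono (Set.subset_biUnion_of_mem hsS) ?_⟩
  rwa [smul_smul, inv_mul_cancel_right]

end

theorem cocompact_intersections_general {G X : Type*} [Group G]
    [MetricSpace X] [MulAction G X]
    (hiso : ∀ g : G, Isometry (fun x : X => g • x))
    (hproper : ∀ K : Set X, IsCompact K → {g : G | ((g • K) ∩ K).Nonempty}.Finite)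
    (A B : Set X)
    (H K : Subgroup G)
    (hHcc : ∃ C : Set X, IsCompact C ∧ ∀ a ∈ A, ∃ h ∈ H, a ∈ h • C)
    (hKcc : ∃ C : Set X, IsCompact C ∧ ∀ b ∈ B, ∃ k ∈ K, b ∈ k • C) :
    ∃ C : Set X, IsCompact C ∧ ∀ x ∈ A ∩ B, ∃ g ∈ H ⊓ K, x ∈ g • C := by
  have : ContinuousConstSMul G X := ⟨fun g => (hiso g).continuous⟩
  obtain ⟨CA, hCA, hA⟩ := hHcc
  obtain ⟨CB, hCB, hB⟩ := hKcc
  have hF : {g : G | (g • CB ∩ CA).Nonempty}.Finite :=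
    (hproper _ (hCA.union hCB)).subset fun g hg => hg.mono <|
      Set.inter_subset_inter (Set.smul_set_mono Set.subset_union_right) Set.subset_union_left
  obtain ⟨S, hS, hcover⟩ := exists_finite_inf_smul_cover H K hF
  refine ⟨⋃ s ∈ S, s • CA, hS.isCompact_biUnion fun s _ => hCA.smul s, ?_⟩
  rintro x ⟨hxA, hxB⟩
  obtain ⟨h, hh, hxh⟩ := hA x hxA
  obtain ⟨k, hk, hxk⟩ := hB x hxB
  exact hcover x h hh k hk hxh hxk

/-- Cocompact intersections: if `H` and `K` act cocompactly on invariant closed subsets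
`A` and `B` of a space with a proper cocompact `G`-action, then `H ⊓ K` acts cocompactly
on `A ∩ B`. -/
theorem cocompact_intersections {G X : Type*} [Group G]
    [MetricSpace X] [ProperSpace X] [MulAction G X]
    (hiso : ∀ g : G, Isometry (fun x : X => g • x))
    (hproper : ∀ K : Set X, IsCompact K → {g : G | ((g • K) ∩ K).Nonempty}.Finite)
    (hcocpt : ∃ K : Set X, IsCompact K ∧ ⋃ g : G, g • K = Set.univ)
    (A B : Set X) (hAne : A.Nonempty) (hBne : B.Nonempty)
    (hAcl : IsClosed A) (hBcl : IsClosed B)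
    (H K : Subgroup G)
    (hHA : ∀ h ∈ H, h • A = A) (hKB : ∀ k ∈ K, k • B = B)
    (hHcc : ∃ C : Set X, IsCompact C ∧ ∀ a ∈ A, ∃ h ∈ H, a ∈ h • C)
    (hKcc : ∃ C : Set X, IsCompact C ∧ ∀ b ∈ B, ∃ k ∈ K, b ∈ k • C) :
    ∃ C : Set X, IsCompact C ∧ ∀ x ∈ A ∩ B, ∃ g ∈ H ⊓ K, x ∈ g • C :=
  cocompact_intersections_general hiso hproper A B H K hHcc hKcc
end

section
/- Let n = 3 or n ≥ 5, and let the symmetric group S_n act on ℤⁿ by permuting coordinates, inducing an action on the set of subgroups of ℤⁿ. Then for every maximal infinite cyclic subgroup C ≤ ℤⁿ with C ≠ ⟨(1,1,…,1)⟩, the S_n-orbit of C contains at least n distinct subgroups. -/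
/-!
A generator `v` of `C` is determined by `C` up to sign. If `|v|` is not constant, `σ • C` therefore
determines `σ • S` for the level set `S = {x | |v x| = |v i|}`, so the orbit of `C` is at least as
large as the orbit of `S`, which has `n.choose #S ≥ n` elements. If `|v|` is constant, maximality
and `C ≠ ⟨(1, …, 1)⟩` force both signs to occur, and `σ • C` determines `σ • S`, for
`S = {x | 0 < v x}`, up to complement. Complementing changes the cardinality unless `2 * #S = n`;
in that balanced case the orbit still has at least `centralBinom (n / 2) / 2` elements, which is
at least `n` once `n / 2 ≥ 3`.
-/

/-- The action of a permutation `σ` of coordinates on `ℤⁿ`, as an additive homomorphism. -/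
def permAddHom (n : ℕ) (σ : Equiv.Perm (Fin n)) : (Fin n → ℤ) →+ (Fin n → ℤ) where
  toFun v := v ∘ σ.symm
  map_zero' := rfl
  map_add' _ _ := rfl

open Finset Function Equiv
open scoped Pointwise

theorem Nat.self_le_choose {n k : ℕ} (hk : 0 < k) (hkn : k < n) : n ≤ n.choose k := by
  wlog hhalf : k ≤ n / 2 generalizing k
  · rw [← Nat.choose_symm hkn.le]
    exact this (by omega) (by omega) (by omega)
  induction k, hk using Nat.le_induction with
  | base => rw [Nat.choose_one_right]
  | succ k hk ih =>
    exact (ih (by omega) (by omega)).trans (Nat.choose_le_succ_of_lt_half_left (by omega))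

theorem Nat.four_mul_le_centralBinom {k : ℕ} (hk : 3 ≤ k) : 4 * k ≤ k.centralBinom := by
  induction k, hk using Nat.le_induction with
  | base => decide
  | succ k hk ih =>
    have := Nat.succ_mul_centralBinom_succ k
    nlinarith

namespace Set

variable {ι α β : Type*} [Nonempty ι] {f : ι → α} {g : ι → β}

theorem range_subset_image_range_invFun (e : β → β)
    (h : ∀ i j, f i = f j → g i = g j ∨ g i = e (g j)) :
    range g ⊆ (g ∘ invFun f) '' range f ∪ e '' ((g ∘ invFun f) '' range f) := by
  rintro _ ⟨i, rfl⟩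
  have hi : f i = f (invFun f (f i)) := (invFun_eq ⟨i, rfl⟩).symm
  rcases h _ _ hi with hg | hg
  · exact Or.inl ⟨f i, mem_range_self i, hg.symm⟩
  · exact Or.inr ⟨_, ⟨f i, mem_range_self i, rfl⟩, hg.symm⟩

theorem ncard_range_le_two_mul_of_eq_imp [Finite ι] (e : β → β)
    (h : ∀ i j, f i = f j → g i = g j ∨ g i = e (g j)) :
    (range g).ncard ≤ 2 * (range f).ncard := by
  have hfin : ((g ∘ invFun f) '' range f).Finite := (finite_range f).image _
  calc (range g).ncard
      ≤ ((g ∘ invFun f) '' range f ∪ e '' ((g ∘ invFun f) '' range f)).ncard :=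
        ncard_le_ncard (range_subset_image_range_invFun e h) (hfin.union (hfin.image e))
    _ ≤ ((g ∘ invFun f) '' range f).ncard + (e '' ((g ∘ invFun f) '' range f)).ncard :=
        ncard_union_le _ _
    _ ≤ 2 * (range f).ncard := by
        have h₁ := ncard_image_le (f := g ∘ invFun f) (finite_range f)
        have h₂ := ncard_image_le (f := e) hfin
        omega

theorem ncard_range_le_of_eq_imp [Finite ι] (h : ∀ i j, f i = f j → g i = g j) :
    (range g).ncard ≤ (range f).ncard := by
  calc (range g).ncard ≤ ((g ∘ invFun f) '' range f).ncard := by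
        refine ncard_le_ncard ?_ ((finite_range f).image _)
        simpa using range_subset_image_range_invFun id fun i j hij => Or.inl (h i j hij)
    _ ≤ (range f).ncard := ncard_image_le (finite_range f)

end Set

namespace Finset

variable {α : Type*} [DecidableEq α]

theorem range_perm_smul_eq_powersetCard (S : Finset α) :
    Set.range (fun σ : Perm α => σ • S) = Set.powersetCard α #S := by
  ext T
  constructor
  · rintro ⟨σ, rfl⟩
    exact card_smul_finset σ S
  · intro hT
    have := Set.powersetCard.isPretransitive (α := α) (n := #S)
    obtain ⟨σ, hσ⟩ := MulAction.exists_smul_eq (Perm α)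
      (⟨S, rfl⟩ : Set.powersetCard α #S) ⟨T, hT⟩
    exact ⟨σ, congrArg Subtype.val hσ⟩

theorem ncard_range_perm_smul (S : Finset α) :
    (Set.range fun σ : Perm α => σ • S).ncard = (Nat.card α).choose #S := by
  rw [range_perm_smul_eq_powersetCard, ← Nat.card_coe_set_eq, Set.powersetCard.card]

theorem perm_smul_filter_univ [Fintype α] (σ : Perm α) (p : α → Prop) [DecidablePred p] :
    σ • univ.filter p = univ.filter fun x => p (σ.symm x) := by
  ext x
  simp only [mem_smul_finset, mem_filter, mem_univ, true_and, Perm.smul_def]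
  exact ⟨by rintro ⟨y, hy, rfl⟩; simpa using hy, fun hx => ⟨σ.symm x, hx, by simp⟩⟩

end Finset

section PermOrbit

variable {α X : Type*} [Fintype α] [DecidableEq α] {F : Perm α → X} {S : Finset α}

theorem card_le_ncard_range_of_perm_smul_eq (hS₀ : 0 < #S) (hS₁ : #S < Fintype.card α)
    (h : ∀ σ τ, F σ = F τ → σ • S = τ • S) : Fintype.card α ≤ (Set.range F).ncard :=
  calc Fintype.card α ≤ (Fintype.card α).choose #S := Nat.self_le_choose hS₀ hS₁
    _ = (Set.range fun σ : Perm α => σ • S).ncard := by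
      rw [ncard_range_perm_smul, Nat.card_eq_fintype_card]
    _ ≤ (Set.range F).ncard := Set.ncard_range_le_of_eq_imp h

theorem choose_card_le_two_mul_ncard_range_of_perm_smul_eq_or_compl
    (h : ∀ σ τ, F σ = F τ → σ • S = τ • S ∨ σ • S = (τ • S)ᶜ) :
    (Fintype.card α).choose #S ≤ 2 * (Set.range F).ncard := by
  rw [← Nat.card_eq_fintype_card, ← ncard_range_perm_smul]
  exact Set.ncard_range_le_two_mul_of_eq_imp compl h

end PermOrbit

theorem mem_zmultiples_one_of_abs_eq {ι : Type*} {v : ι → ℤ} (habs : ∀ i j, |v i| = |v j|)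
    (hsign : (∀ i, 0 ≤ v i) ∨ ∀ i, v i ≤ 0) : v ∈ AddSubgroup.zmultiples (fun _ => 1) := by
  rcases isEmpty_or_nonempty ι with hι | ⟨⟨i₀⟩⟩
  · exact ⟨0, Subsingleton.elim _ _⟩
  refine ⟨v i₀, funext fun i => ?_⟩
  have := abs_eq_abs.mp (habs i i₀)
  simp only [Pi.smul_apply, smul_eq_mul, mul_one]
  rcases hsign with h | h <;> have := h i <;> have := h i₀ <;> omega

theorem map_permAddHom_zmultiples (n : ℕ) (σ : Perm (Fin n)) (v : Fin n → ℤ) :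
    (AddSubgroup.zmultiples v).map (permAddHom n σ) = AddSubgroup.zmultiples (v ∘ σ.symm) :=
  AddMonoidHom.map_zmultiples _ v

theorem eq_or_eq_neg_of_map_permAddHom_eq {n : ℕ} {σ τ : Perm (Fin n)} {v : Fin n → ℤ}
    (hv : v ≠ 0)
    (h : (AddSubgroup.zmultiples v).map (permAddHom n σ) =
      (AddSubgroup.zmultiples v).map (permAddHom n τ)) :
    (∀ x, v (σ.symm x) = v (τ.symm x)) ∨ ∀ x, v (σ.symm x) = -v (τ.symm x) := by
  have hσ : v ∘ σ.symm ≠ 0 := fun h0 => hv <| by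
    simpa [Function.comp_assoc] using congrArg (· ∘ σ) h0
  rw [map_permAddHom_zmultiples, map_permAddHom_zmultiples,
    AddSubgroup.zmultiples_eq_zmultiples_iff (not_isOfFinAddOrder_of_isAddTorsionFree hσ)] at h
  rcases h with h | h
  · exact Or.inl (congrFun h)
  · refine Or.inr fun x => ?_
    have hx := congrFun h x
    simp only [Pi.neg_apply, Function.comp_apply] at hx
    rw [← hx, neg_neg]

theorem le_ncard_orbit_of_abs_ne {n : ℕ} {v : Fin n → ℤ} {i j : Fin n} (hij : |v i| ≠ |v j|) :
    n ≤ (Set.range fun σ => (AddSubgroup.zmultiples v).map (permAddHom n σ)).ncard := by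
  have hv : v ≠ 0 := by rintro rfl; simp at hij
  set S := univ.filter fun x => |v x| = |v i|
  have hS₀ : 0 < #S := card_pos.mpr ⟨i, by simp [S]⟩
  have hS₁ : #S < Fintype.card (Fin n) :=
    card_lt_univ_of_notMem (x := j) (by simp [S, Ne.symm hij])
  refine (Fintype.card_fin n).ge.trans <| card_le_ncard_range_of_perm_smul_eq hS₀ hS₁
    fun σ τ h => ?_
  simp only [S, perm_smul_filter_univ]
  refine filter_congr fun x _ => ?_
  rcases eq_or_eq_neg_of_map_permAddHom_eq hv h with h' | h' <;>
    simp [h' x]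

theorem le_ncard_orbit_of_abs_eq {n : ℕ} (hn : n = 3 ∨ 5 ≤ n) {v : Fin n → ℤ}
    (habs : ∀ i j, |v i| = |v j|) {i j : Fin n} (hi : 0 < v i) (hj : v j < 0) :
    n ≤ (Set.range fun σ => (AddSubgroup.zmultiples v).map (permAddHom n σ)).ncard := by
  have hnz : ∀ x, v x ≠ 0 := fun x hx => by
    have h := habs x i
    rw [hx, abs_zero] at h
    exact hi.ne' (abs_eq_zero.mp h.symm)
  have hv : v ≠ 0 := fun h => hnz i (congrFun h i)
  set S := univ.filter fun x => 0 < v x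
  have hS₀ : 0 < #S := card_pos.mpr ⟨i, by simp [S, hi]⟩
  have hS₁ : #S < Fintype.card (Fin n) := card_lt_univ_of_notMem (x := j) (by simp [S, hj.le])
  have hsign : ∀ σ τ, (AddSubgroup.zmultiples v).map (permAddHom n σ) =
      (AddSubgroup.zmultiples v).map (permAddHom n τ) → σ • S = τ • S ∨ σ • S = (τ • S)ᶜ := by
    intro σ τ h
    simp only [S, perm_smul_filter_univ, compl_filter]
    rcases eq_or_eq_neg_of_map_permAddHom_eq hv h with h' | h'
    · exact Or.inl (filter_congr fun x _ => by simp [h' x])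
    · refine Or.inr (filter_congr fun x _ => ?_)
      have := hnz (τ.symm x)
      rw [h' x]
      omega
  by_cases hbal : 2 * #S = n
  · have hk : 3 ≤ #S := by omega
    have hcentral : (Fintype.card (Fin n)).choose #S = (#S).centralBinom := by
      rw [Fintype.card_fin, Nat.centralBinom_eq_two_mul_choose, hbal]
    have hpair := choose_card_le_two_mul_ncard_range_of_perm_smul_eq_or_compl hsign
    have hbound := Nat.four_mul_le_centralBinom hk
    omega
  · refine (Fintype.card_fin n).ge.trans <| card_le_ncard_range_of_perm_smul_eq hS₀ hS₁
      fun σ τ h =>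
      (hsign σ τ h).resolve_right fun hc => hbal <| by
        have := congrArg card hc
        rw [card_compl, card_smul_finset, card_smul_finset, Fintype.card_fin] at this
        omega

/-- For `n = 3` or `n ≥ 5`, the `Sₙ`-orbit of any maximal infinite cyclic subgroup of `ℤⁿ`
other than `⟨(1,…,1)⟩` contains at least `n` distinct subgroups. -/
theorem orbit_of_maximal_cyclic_large (n : ℕ) (hn : n = 3 ∨ 5 ≤ n)
    (C : AddSubgroup (Fin n → ℤ))
    (hcyc : ∃ v : Fin n → ℤ, v ≠ 0 ∧ C = AddSubgroup.zmultiples v)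
    (hmax : ∀ D : AddSubgroup (Fin n → ℤ),
      (∃ w : Fin n → ℤ, w ≠ 0 ∧ D = AddSubgroup.zmultiples w) → C ≤ D → C = D)
    (hne : C ≠ AddSubgroup.zmultiples (fun _ : Fin n => (1 : ℤ))) :
    n ≤ {D : AddSubgroup (Fin n → ℤ) |
      ∃ σ : Equiv.Perm (Fin n), D = AddSubgroup.map (permAddHom n σ) C}.ncard := by
  obtain ⟨v, -, rfl⟩ := hcyc
  have horbit : {D | ∃ σ, D = (AddSubgroup.zmultiples v).map (permAddHom n σ)} =
      Set.range fun σ => (AddSubgroup.zmultiples v).map (permAddHom n σ) := by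
    ext; simp [eq_comm]
  rw [horbit]
  by_cases habs : ∀ i j, |v i| = |v j|
  · have hsign : ¬((∀ i, 0 ≤ v i) ∨ ∀ i, v i ≤ 0) := fun hsign =>
      hne <| hmax _ ⟨_, Function.ne_iff.mpr ⟨⟨0, by omega⟩, one_ne_zero⟩, rfl⟩
        (AddSubgroup.zmultiples_le_of_mem (mem_zmultiples_one_of_abs_eq habs hsign))
    push Not at hsign
    obtain ⟨⟨j, hj⟩, i, hi⟩ := hsign
    exact le_ncard_orbit_of_abs_eq hn habs hi hj
  · push Not at habs
    obtain ⟨i, j, hij⟩ := habs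
    exact le_ncard_orbit_of_abs_ne hij
end
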